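/- arXiv:1307.6477 — 3 statements merged into one kernel-verified Lean document; each statement's English description precedes it below -/
import Mathlib

section
/- Let G(U, V, E) be a (k, d, ε)-lossless expander with adjacency matrix A ∈ {0,1}^{n×N}. Then for every x ∈ ℝ^N with at most k nonzero entries, ‖Ax‖₁ ≥ (1 - 2ε) d ‖x‖₁. -/
/-!
Give every row `i` that meets the support of `x` its heaviest neighbour `top i`, a support column
adjacent to `i` maximising `|x j|`. Isolating that term in row `i` gives
`|(A x)_i| ≥ 2 |x (top i)| - ∑_j |A i j x j|`, and the subtracted terms sum to `d ‖x‖₁` over all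
rows. The set of rows whose heaviest neighbour has weight `> t` is exactly the neighbourhood of the
superlevel set `{|x j| > t}`, so expansion gives
`#{i | |x (top i)| > t} ≥ (1 - ε) d #{j | |x j| > t}` for every `t`; integrating over `t` (a finite
layer-cake summation) yields `∑_i |x (top i)| ≥ (1 - ε) d ‖x‖₁`, and hence
`‖A x‖₁ ≥ (2 (1 - ε) - 1) d ‖x‖₁`.
-/

open Finset

theorem Finset.two_mul_abs_sub_sum_abs_le_abs_sum {ι : Type*} [DecidableEq ι] {s : Finset ι}
    (f : ι → ℝ) {a : ι} (ha : a ∈ s) :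
    2 * |f a| - ∑ j ∈ s, |f j| ≤ |∑ j ∈ s, f j| := by
  rw [← add_sum_erase s f ha, ← add_sum_erase s (fun j => |f j|) ha]
  have := abs_sum_le_sum_abs f (s.erase a)
  have := abs_add' (f a) (∑ j ∈ s.erase a, f j)
  rw [add_comm (∑ j ∈ s.erase a, f j)] at this
  linarith

/-- Abel summation in layer-cake form: peel off the minimum value of `w` and recurse on the strict
superlevel set. -/
theorem Finset.sum_mul_sub_nonneg_of_sum_superlevel_nonneg {ι : Type*} (s : Finset ι)
    (G w : ι → ℝ) (b : ℝ) (hb : ∀ j ∈ s, b ≤ w j)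
    (hG : ∀ t, 0 ≤ ∑ j ∈ s with t < w j, G j) :
    0 ≤ ∑ j ∈ s, G j * (w j - b) := by
  induction s using Finset.strongInduction generalizing b with
  | H s ih =>
  rcases s.eq_empty_or_nonempty with rfl | hs
  · simp
  obtain ⟨a, ha, hmin⟩ := s.exists_min_image w hs
  set s' := s.filter (fun j => w a < w j)
  have hs' : s' ⊂ s := filter_ssubset.mpr ⟨a, ha, lt_irrefl _⟩
  have hlevel : ∀ t, ∑ j ∈ s' with t < w j, G j = ∑ j ∈ s with max t (w a) < w j, G j := by
    intro t
    rw [filter_filter]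
    simp only [max_lt_iff, and_comm]
  have hIH := ih s' hs' (w a) (fun j hj => (mem_filter.mp hj).2.le)
    (fun t => (hlevel t).symm ▸ hG _)
  have hsplit : ∑ j ∈ s, G j * (w j - b)
      = (w a - b) * ∑ j ∈ s, G j + ∑ j ∈ s', G j * (w j - w a) := by
    rw [sum_filter_of_ne, mul_sum, ← sum_add_distrib]
    · exact sum_congr rfl fun j _ => by ring
    · intro j hj hne
      exact lt_of_le_of_ne (hmin j hj) fun h => hne (by rw [h, sub_self, mul_zero])
  have hmass : 0 ≤ ∑ j ∈ s, G j := by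
    simpa [filter_true_of_mem fun j hj => (sub_one_lt (w a)).trans_le (hmin j hj)]
      using hG (w a - 1)
  rw [hsplit]
  exact add_nonneg (mul_nonneg (sub_nonneg.mpr (hb a ha)) hmass) hIH

theorem Finset.sum_comp_eq_sum_card_fiber_mul {ι κ : Type*} [DecidableEq ι] {s : Finset ι}
    {R : Finset κ} {g : κ → ι} (hg : ∀ i ∈ R, g i ∈ s) (φ : ι → ℝ) :
    ∑ i ∈ R, φ (g i) = ∑ j ∈ s, (#{i ∈ R | g i = j} : ℝ) * φ j := by
  rw [← sum_fiberwise_of_maps_to hg]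
  refine sum_congr rfl fun j _ => ?_
  rw [sum_congr rfl fun i hi => by rw [(mem_filter.mp hi).2], sum_const, nsmul_eq_mul]

theorem Finset.mul_sum_le_sum_comp_of_card_superlevel {ι κ : Type*} [DecidableEq ι]
    {s : Finset ι} {R : Finset κ} {g : κ → ι} (hg : ∀ i ∈ R, g i ∈ s)
    {w : ι → ℝ} (hw : ∀ j ∈ s, 0 ≤ w j) (c : ℝ)
    (hcard : ∀ t, c * #{j ∈ s | t < w j} ≤ #{i ∈ R | t < w (g i)}) :
    c * ∑ j ∈ s, w j ≤ ∑ i ∈ R, w (g i) := by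
  have hlevel : ∀ t,
      (#{i ∈ R | t < w (g i)} : ℝ) = ∑ j ∈ s with t < w j, (#{i ∈ R | g i = j} : ℝ) := by
    intro t
    rw [← sum_boole, sum_comp_eq_sum_card_fiber_mul hg (fun j => if t < w j then (1 : ℝ) else 0),
      sum_filter]
    simp only [mul_boole]
  have := s.sum_mul_sub_nonneg_of_sum_superlevel_nonneg (fun j => #{i ∈ R | g i = j} - c) w 0 hw
    fun t => by rw [sum_sub_distrib, ← hlevel, sum_const, nsmul_eq_mul]; linarith [hcard t]
  rw [sum_comp_eq_sum_card_fiber_mul hg w, mul_sum]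
  simp only [sub_zero, sub_mul, sum_sub_distrib] at this
  linarith

namespace Matrix

open Classical

variable {m ι : Type*} [Fintype m] (A : Matrix m ι ℝ)

noncomputable def neighbors (X : Finset ι) : Finset m := univ.filter fun i => ∃ j ∈ X, A i j ≠ 0

theorem sum_sum_abs_mul_eq_of_zero_one [Fintype ι] {d : ℕ}
    (h01 : ∀ i j, A i j = 0 ∨ A i j = 1) (hcol : ∀ j, #{i | A i j ≠ 0} = d) (x : ι → ℝ) :
    ∑ i, ∑ j, |A i j * x j| = d * ∑ j, |x j| := by
  rw [sum_comm, mul_sum]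
  refine sum_congr rfl fun j _ => ?_
  have hA : ∀ i, |A i j * x j| = if A i j ≠ 0 then |x j| else 0 := by
    intro i
    rcases h01 i j with h | h <;> simp [h]
  simp only [hA, sum_ite, sum_const_zero, add_zero, sum_const, nsmul_eq_mul, hcol]

theorem exists_heaviest_neighbor [Nonempty ι] (S : Finset ι) (w : ι → ℝ) :
    ∃ top : m → ι, ∀ i ∈ A.neighbors S,
      top i ∈ S ∧ A i (top i) ≠ 0 ∧ ∀ j ∈ S, A i j ≠ 0 → w j ≤ w (top i) := by
  have : ∀ i, ∃ j, i ∈ A.neighbors S →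
      j ∈ S ∧ A i j ≠ 0 ∧ ∀ j' ∈ S, A i j' ≠ 0 → w j' ≤ w j := by
    intro i
    by_cases hi : i ∈ A.neighbors S
    · obtain ⟨j, hj, hmax⟩ := exists_max_image {j ∈ S | A i j ≠ 0} w
        (by simpa [neighbors, Finset.Nonempty] using hi)
      obtain ⟨hjS, hAj⟩ := mem_filter.mp hj
      exact ⟨j, fun _ => ⟨hjS, hAj, fun j' hj' hA => hmax j' (mem_filter.mpr ⟨hj', hA⟩)⟩⟩
    · exact ⟨Classical.arbitrary _, fun h => absurd h hi⟩
  choose top htop using this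
  exact ⟨top, fun i hi => htop i hi⟩

variable {A}

theorem neighbors_filter_lt_eq {S : Finset ι} {w : ι → ℝ} {top : m → ι}
    (htop : ∀ i ∈ A.neighbors S,
      top i ∈ S ∧ A i (top i) ≠ 0 ∧ ∀ j ∈ S, A i j ≠ 0 → w j ≤ w (top i)) (t : ℝ) :
    A.neighbors {j ∈ S | t < w j} = {i ∈ A.neighbors S | t < w (top i)} := by
  ext i
  constructor
  · intro hi
    obtain ⟨j, hj, hAj⟩ := (mem_filter.mp hi).2
    obtain ⟨hjS, hjt⟩ := mem_filter.mp hj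
    have hiS : i ∈ A.neighbors S := mem_filter.mpr ⟨mem_univ i, j, hjS, hAj⟩
    exact mem_filter.mpr ⟨hiS, hjt.trans_le ((htop i hiS).2.2 j hjS hAj)⟩
  · intro hi
    obtain ⟨hiS, ht⟩ := mem_filter.mp hi
    obtain ⟨htopS, hAtop, -⟩ := htop i hiS
    exact mem_filter.mpr ⟨mem_univ i, top i, mem_filter.mpr ⟨htopS, ht⟩, hAtop⟩

theorem two_mul_sum_abs_top_sub_le_sum_abs_mulVec [Fintype ι]
    (h01 : ∀ i j, A i j = 0 ∨ A i j = 1) {x : ι → ℝ} {S : Finset ι} (hS : ∀ j, x j ≠ 0 → j ∈ S)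
    {top : m → ι} (htop : ∀ i ∈ A.neighbors S, A i (top i) ≠ 0) :
    2 * ∑ i ∈ A.neighbors S, |x (top i)| - ∑ i, ∑ j, |A i j * x j| ≤ ∑ i, |(A *ᵥ x) i| := by
  have hrow : ∀ i, (if i ∈ A.neighbors S then 2 * |x (top i)| else 0) - ∑ j, |A i j * x j|
      ≤ |(A *ᵥ x) i| := by
    intro i
    split_ifs with hi
    · have hA1 : A i (top i) = 1 := (h01 i (top i)).resolve_left (htop i hi)
      rw [show (A *ᵥ x) i = ∑ j, A i j * x j from rfl]
      simpa [hA1] using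
        two_mul_abs_sub_sum_abs_le_abs_sum (fun j => A i j * x j) (mem_univ (top i))
    · have hzero : ∀ j, A i j * x j = 0 := by
        intro j
        by_contra h
        exact hi (mem_filter.mpr
          ⟨mem_univ i, j, hS j (right_ne_zero_of_mul h), left_ne_zero_of_mul h⟩)
      simp [hzero]
  calc 2 * ∑ i ∈ A.neighbors S, |x (top i)| - ∑ i, ∑ j, |A i j * x j|
      = ∑ i, ((if i ∈ A.neighbors S then 2 * |x (top i)| else 0) - ∑ j, |A i j * x j|) := by
        rw [sum_sub_distrib, mul_sum, sum_ite_mem, univ_inter]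
    _ ≤ ∑ i, |(A *ᵥ x) i| := sum_le_sum fun i _ => hrow i

end Matrix

open Classical in
theorem stmt_10 (n N d k : ℕ) (ε : ℝ) (A : Matrix (Fin n) (Fin N) ℝ)
    (hzeroone : ∀ i j, A i j = 0 ∨ A i j = 1)
    (hcol : ∀ j, (univ.filter (fun i => A i j ≠ 0)).card = d)
    (hexpand : ∀ X : Finset (Fin N), X.card ≤ k →
      ((univ.filter (fun i => ∃ j ∈ X, A i j ≠ 0)).card : ℝ) ≥ (1 - ε) * d * X.card)
    (x : Fin N → ℝ) (hx : (univ.filter (fun j => x j ≠ 0)).card ≤ k) :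
    ∑ i, |A.mulVec x i| ≥ (1 - 2 * ε) * d * ∑ j, |x j| := by
  rcases isEmpty_or_nonempty (Fin N) with _ | _
  · simpa using sum_nonneg fun i _ => abs_nonneg _
  set S := univ.filter fun j => x j ≠ 0
  obtain ⟨top, htop⟩ := A.exists_heaviest_neighbor S fun j => |x j|
  have hrow := A.two_mul_sum_abs_top_sub_le_sum_abs_mulVec hzeroone
    (fun j hj => by simpa [S] using hj) fun i hi => (htop i hi).2.1
  have hcount : (1 - ε) * d * ∑ j, |x j| ≤ ∑ i ∈ A.neighbors S, |x (top i)| := by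
    have hsupp : ∑ j ∈ S, |x j| = ∑ j, |x j| :=
      sum_filter_of_ne fun j _ h => abs_ne_zero.mp h
    rw [← hsupp]
    refine mul_sum_le_sum_comp_of_card_superlevel (fun i hi => (htop i hi).1)
      (fun j _ => abs_nonneg _) _ fun t => ?_
    rw [← Matrix.neighbors_filter_lt_eq htop t, Matrix.neighbors]
    -- `hexpand` decides `∃ j ∈ X` by `Nat.decidableExistsFin`, `neighbors` by the generic instance
    convert hexpand _ ((card_filter_le S fun j => t < |x j|).trans hx) using 4
  rw [A.sum_sum_abs_mul_eq_of_zero_one hzeroone hcol] at hrow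
  linarith
end

section
/- In a dyadic splitting of a set of s ≥ 1 columns, where a node with m columns (m ≥ 2) is split into children with ⌈m/2⌉ and ⌊m/2⌋ columns, at every level of the resulting binary tree the node sizes take at most two distinct values, and these two values differ by exactly 1; specifically, at level j all node sizes lie in {⌈s/2^j⌉, ⌊s/2^j⌋}. -/
/-!
Write `⌊s/2^j⌋ = s / 2^j` and `⌈s/2^j⌉ = (s + 2^j - 1) / 2^j`. Halving commutes with both roundings,
`⌊⌊x⌋/2⌋ = ⌊x/2⌋` and `⌈⌈x⌉/2⌉ = ⌈x/2⌉`, so by induction on the level every node size lies between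
`⌊s/2^j⌋` and `⌈s/2^j⌉`. These two differ by at most one, so the node size is one of them.
-/

namespace Nat

lemma add_sub_one_div_le_div_add_one (a b : ℕ) : (a + b - 1) / b ≤ a / b + 1 := by
  rcases b.eq_zero_or_pos with rfl | hb
  · simp
  · calc (a + b - 1) / b ≤ (a + b) / b := Nat.div_le_div_right (by omega)
      _ = a / b + 1 := Nat.add_div_right a hb

lemma add_sub_one_div_add_one_div_two (a : ℕ) {b : ℕ} (hb : 0 < b) :
    ((a + b - 1) / b + 1) / 2 = (a + b * 2 - 1) / (b * 2) := by
  rw [← Nat.add_div_right _ hb, Nat.div_div_eq_div_mul]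
  congr 1
  omega

end Nat

theorem mem_Icc_of_dyadic_split (s : ℕ) (T : ℕ → ℕ → ℕ) (hroot : T 0 0 = s)
    (hsplit : ∀ j i, T (j + 1) (2 * i) = (T j i + 1) / 2 ∧
      T (j + 1) (2 * i + 1) = T j i / 2) :
    ∀ j, ∀ i < 2 ^ j, T j i ∈ Set.Icc (s / 2 ^ j) ((s + 2 ^ j - 1) / 2 ^ j) := by
  intro j
  induction j with
  | zero =>
    intro i hi
    obtain rfl : i = 0 := by omega
    simp [hroot]
  | succ j ih =>
    intro i hi
    have hfloor : s / 2 ^ (j + 1) = s / 2 ^ j / 2 := by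
      rw [pow_succ, Nat.div_div_eq_div_mul]
    have hceil : (s + 2 ^ (j + 1) - 1) / 2 ^ (j + 1) = ((s + 2 ^ j - 1) / 2 ^ j + 1) / 2 := by
      rw [pow_succ, Nat.add_sub_one_div_add_one_div_two s (by positivity)]
    rw [Set.mem_Icc, hfloor, hceil]
    obtain ⟨k, rfl | rfl⟩ := Nat.even_or_odd' i
    all_goals
      obtain ⟨hlo, hhi⟩ := ih k (by rw [pow_succ] at hi; omega)
      obtain ⟨hleft, hright⟩ := hsplit j k
      omega

theorem stmt_15_general (s : ℕ) (T : ℕ → ℕ → ℕ)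
    (hroot : T 0 0 = s)
    (hsplit : ∀ j i, T (j + 1) (2 * i) = (T j i + 1) / 2 ∧
      T (j + 1) (2 * i + 1) = T j i / 2) :
    ∀ j, (∀ i < 2 ^ j, T j i = (s + 2 ^ j - 1) / 2 ^ j ∨ T j i = s / 2 ^ j) ∧
      (s + 2 ^ j - 1) / 2 ^ j - s / 2 ^ j ≤ 1 := by
  intro j
  have hgap := Nat.add_sub_one_div_le_div_add_one s (2 ^ j)
  refine ⟨fun i hi => ?_, by omega⟩
  obtain ⟨hlo, hhi⟩ := mem_Icc_of_dyadic_split s T hroot hsplit j i hi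
  omega

theorem stmt_15 (s : ℕ) (hs : 1 ≤ s) (T : ℕ → ℕ → ℕ)
    (hroot : T 0 0 = s)
    (hsplit : ∀ j i, T (j + 1) (2 * i) = (T j i + 1) / 2 ∧
      T (j + 1) (2 * i + 1) = T j i / 2) :
    ∀ j, (∀ i < 2 ^ j, T j i = (s + 2 ^ j - 1) / 2 ^ j ∨ T j i = s / 2 ^ j) ∧
      (s + 2 ^ j - 1) / 2 ^ j - s / 2 ^ j ≤ 1 :=
  stmt_15_general s T hroot hsplit
end

section
/- Let A be an n×N matrix in which every nonzero entry is ±1 and every column has exactly d nonzeros, and suppose the underlying 0/1 support matrix is the adjacency matrix of a (k, d, ε)-lossless expander. Then for every x ∈ ℝ^N with at most k nonzeros, ‖Ax‖₁ ≥ (1 - 2ε) d ‖x‖₁ and ‖Ax‖₁ ≤ d‖x‖₁. -/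
open Finset

open scoped NNReal

/-!
Put `w = |x|` and let `Γ(i)` be the support of row `i`. Row `i` of `A x` contains its largest
visible coordinate `x_{j(i)}` with coefficient `±1`, so by the triangle inequality
`|(A x)_i| ≥ 2 max_{Γ(i)} w - ∑_j |A_ij x_j|`. Summed over the rows, the subtracted terms total
`d ‖x‖₁`, while expansion gives `∑_i max_{Γ(i)} w ≥ (1 - ε) d ‖x‖₁`: lowering `w` by its minimum
`m` on its support `S` lowers the maximum by `m` in each of the at least `(1 - ε) d |S|` rows
meeting `S`, and we induct on the support. The upper bound is the triangle inequality alone.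
-/

theorem Finset.sup_tsub_add_le {κ : Type*} (s : Finset κ) (w : κ → ℝ≥0) {c : ℝ≥0}
    (h : ∃ j ∈ s, c ≤ w j) : s.sup (fun j => w j - c) + c ≤ s.sup w := by
  obtain ⟨j, hj, hcj⟩ := h
  calc s.sup (fun j => w j - c) + c ≤ (s.sup w - c) + c :=
        add_le_add_left (Finset.sup_le fun j' hj' => tsub_le_tsub_right (le_sup hj') c) c
    _ = s.sup w := tsub_add_cancel_of_le (hcj.trans (le_sup hj))

theorem Finset.two_mul_norm_le_norm_sum_add_sum_norm {κ E : Type*} [SeminormedAddCommGroup E]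
    [DecidableEq κ] {s : Finset κ} {j : κ} (hj : j ∈ s) (f : κ → E) :
    2 * ‖f j‖ ≤ ‖∑ i ∈ s, f i‖ + ∑ i ∈ s, ‖f i‖ := by
  have hsplit : f j = ∑ i ∈ s, f i - ∑ i ∈ s.erase j, f i := by
    rw [← add_sum_erase s f hj, add_sub_cancel_right]
  have hrest : ‖∑ i ∈ s.erase j, f i‖ ≤ ∑ i ∈ s.erase j, ‖f i‖ := norm_sum_le _ _
  have hj' : ‖f j‖ ≤ ‖∑ i ∈ s, f i‖ + ‖∑ i ∈ s.erase j, f i‖ := hsplit ▸ norm_sub_le _ _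
  rw [← add_sum_erase s (‖f ·‖) hj]
  linarith

section Expansion

variable {ι κ : Type*} [Fintype ι] [DecidableEq κ]

theorem sum_coe_eq_sum_tsub_add [Fintype κ] (w : κ → ℝ≥0) {S : Finset κ} {c : ℝ≥0}
    (hc : ∀ j ∈ S, c ≤ w j) (hS : ∀ j ∉ S, w j = 0) :
    ∑ j, (w j : ℝ) = ∑ j, ((w j - c : ℝ≥0) : ℝ) + c * #S := by
  have h : ∀ j, (w j : ℝ) = ((w j - c : ℝ≥0) : ℝ) + if j ∈ S then (c : ℝ) else 0 := by
    intro j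
    by_cases hj : j ∈ S
    · simp [hj, NNReal.coe_sub (hc j hj)]
    · simp [hj, hS j hj]
  simp only [h, sum_add_distrib, sum_ite_mem, univ_inter, sum_const, nsmul_eq_mul, mul_comm]

theorem sum_sup_tsub_add_le (Γ : ι → Finset κ) (w : κ → ℝ≥0) {S : Finset κ} {c : ℝ≥0}
    (hc : ∀ j ∈ S, c ≤ w j) :
    ∑ i, (((Γ i).sup (fun j => w j - c) : ℝ≥0) : ℝ) + c * #{i | ∃ j ∈ S, j ∈ Γ i}
      ≤ ∑ i, (((Γ i).sup w : ℝ≥0) : ℝ) := by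
  rw [card_filter, Nat.cast_sum, mul_sum, ← sum_add_distrib]
  refine sum_le_sum fun i _ => ?_
  split_ifs with hmeet
  · obtain ⟨j, hjS, hjΓ⟩ := hmeet
    rw [Nat.cast_one, mul_one]
    exact_mod_cast (Γ i).sup_tsub_add_le w ⟨j, hjΓ, hc j hjS⟩
  · rw [Nat.cast_zero, mul_zero, add_zero, NNReal.coe_le_coe]
    exact sup_mono_fun fun j _ => tsub_le_self

theorem mul_sum_le_sum_sup_of_expansion [Fintype κ] (Γ : ι → Finset κ) (α : ℝ) (k : ℕ)
    (hexp : ∀ X : Finset κ, #X ≤ k → α * #X ≤ #{i | ∃ j ∈ X, j ∈ Γ i})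
    (w : κ → ℝ≥0) (hw : #{j | w j ≠ 0} ≤ k) :
    α * ∑ j, (w j : ℝ) ≤ ∑ i, (((Γ i).sup w : ℝ≥0) : ℝ) := by
  suffices ∀ S : Finset κ, ∀ w : κ → ℝ≥0, ({j | w j ≠ 0} : Finset κ) = S → #S ≤ k →
      α * ∑ j, (w j : ℝ) ≤ ∑ i, (((Γ i).sup w : ℝ≥0) : ℝ) from this _ w rfl hw
  intro S
  induction S using Finset.strongInduction with
  | H S ih =>
  intro w hS hk
  have hout : ∀ j ∉ S, w j = 0 := fun j hj => by simpa [← hS] using hj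
  rcases S.eq_empty_or_nonempty with rfl | hne
  · simp only [notMem_empty, not_false_eq_true, hout, NNReal.coe_zero, sum_const_zero, mul_zero]
    exact sum_nonneg fun i _ => NNReal.coe_nonneg _
  obtain ⟨j₀, hj₀, hmin⟩ := S.exists_min_image w hne
  set w' := fun j => w j - w j₀
  have hsupp : ({j | w' j ≠ 0} : Finset κ) ⊂ S := by
    refine (ssubset_iff_of_subset fun j hj => ?_).2 ⟨j₀, hj₀, by simp [w']⟩
    by_contra hjS
    simp [w', hout j hjS] at hj
  have hw' := ih _ hsupp w' rfl ((card_le_card hsupp.subset).trans hk)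
  have hsum := sum_coe_eq_sum_tsub_add w hmin hout
  have hsup := sum_sup_tsub_add_le Γ w hmin
  have hS := mul_le_mul_of_nonneg_left (hexp S hk) (w j₀).coe_nonneg
  rw [hsum]
  linarith

end Expansion

namespace Matrix

variable {ι κ : Type*} (A : Matrix ι κ ℝ)

theorem sum_abs_apply_eq_card [Fintype ι] (habs : ∀ i j, A i j ≠ 0 → |A i j| = 1) (j : κ) :
    ∑ i, |A i j| = #{i | A i j ≠ 0} := by
  rw [card_filter, Nat.cast_sum]
  refine sum_congr rfl fun i _ => ?_
  split_ifs with h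
  · simp [habs i j h]
  · simp [not_not.1 h]

theorem sum_sum_abs_mul_eq [Fintype ι] [Fintype κ] {c : ℝ} (hc : ∀ j, ∑ i, |A i j| = c)
    (x : κ → ℝ) :
    ∑ i, ∑ j, |A i j * x j| = c * ∑ j, |x j| := by
  simp only [abs_mul]
  rw [sum_comm, mul_sum]
  exact sum_congr rfl fun j _ => by rw [← sum_mul, hc]

theorem sum_abs_mulVec_le [Fintype ι] [Fintype κ] (x : κ → ℝ) :
    ∑ i, |(A *ᵥ x) i| ≤ ∑ i, ∑ j, |A i j * x j| :=
  sum_le_sum fun _ _ => abs_sum_le_sum_abs _ _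

theorem two_mul_sup_le_abs_mulVec_add [Fintype κ] [DecidableEq κ]
    (habs : ∀ i j, A i j ≠ 0 → |A i j| = 1) (x : κ → ℝ) (i : ι) :
    2 * ((({j | A i j ≠ 0} : Finset κ).sup (‖x ·‖₊) : ℝ≥0) : ℝ)
      ≤ |(A *ᵥ x) i| + ∑ j, |A i j * x j| := by
  rcases ({j | A i j ≠ 0} : Finset κ).eq_empty_or_nonempty with h | h
  · rw [h, sup_empty, bot_eq_zero', NNReal.coe_zero, mul_zero]
    positivity
  obtain ⟨j, hj, hjmax⟩ := exists_mem_eq_sup _ h (‖x ·‖₊)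
  have hAj : |A i j| = 1 := habs i j (mem_filter.1 hj).2
  have := two_mul_norm_le_norm_sum_add_sum_norm (mem_univ j) (fun j => A i j * x j)
  simpa [hjmax, abs_mul, hAj, mulVec, dotProduct] using this

end Matrix

theorem stmt_17 (n N d k : ℕ) (ε : ℝ) (A : Matrix (Fin n) (Fin N) ℝ)
    (hsign : ∀ i j, A i j = 0 ∨ A i j = 1 ∨ A i j = -1)
    (hcol : ∀ j, (univ.filter (fun i => A i j ≠ 0)).card = d)
    (hexpand : ∀ X : Finset (Fin N), X.card ≤ k →
      ((@filter _ (fun i => ∃ j ∈ X, A i j ≠ 0) (fun _ => inferInstance) univ).card : ℝ) ≥ (1 - ε) * d * X.card)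
    (x : Fin N → ℝ) (hx : (univ.filter (fun j => x j ≠ 0)).card ≤ k) :
    ∑ i, |A.mulVec x i| ≥ (1 - 2 * ε) * d * ∑ j, |x j| ∧
    ∑ i, |A.mulVec x i| ≤ d * ∑ j, |x j| := by
  have habs : ∀ i j, A i j ≠ 0 → |A i j| = 1 := fun i j h => by
    rcases hsign i j with h' | h' | h' <;> simp_all
  have htotal : ∑ i, ∑ j, |A i j * x j| = d * ∑ j, |x j| :=
    A.sum_sum_abs_mul_eq (fun j => by rw [A.sum_abs_apply_eq_card habs, hcol]) x
  have hrows : 2 * ∑ i, ((({j | A i j ≠ 0} : Finset (Fin N)).sup (‖x ·‖₊) : ℝ≥0) : ℝ)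
      ≤ ∑ i, |A.mulVec x i| + d * ∑ j, |x j| := by
    rw [mul_sum, ← htotal, ← sum_add_distrib]
    exact sum_le_sum fun i _ => A.two_mul_sup_le_abs_mulVec_add habs x i
  have hlayer := mul_sum_le_sum_sup_of_expansion (fun i => {j | A i j ≠ 0}) ((1 - ε) * d) k
    (fun X hX => (hexpand X hX).trans_eq (by congr 2; ext i; simp))
    (‖x ·‖₊) (by simpa using hx)
  simp only [coe_nnnorm, Real.norm_eq_abs] at hlayer
  exact ⟨by linarith, htotal ▸ A.sum_abs_mulVec_le x⟩
end
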